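/- arXiv:2012.03272 — 5 statements merged into one kernel-verified Lean document; each statement's English description precedes it below -/
import Mathlib

section
/- Let g_1,...,g_n : Δ → ℝ≥0 be linear (affine-linear) nonnegative functions on a convex subset Δ of ℝ^k, and for 1 ≤ j ≤ n let g^j(y) denote the j-th largest value among g_1(y),...,g_n(y). Then for all y, z ∈ Δ and λ ∈ [0,1], λ·g^j(y) + (1−λ)·g^j(z) ≤ 2·g^j(λy + (1−λ)z). -/
/-- The `j`-th largest value among `v 0, ..., v (n-1)`:
the largest `x` such that at least `j` of the values are `≥ x`. -/
noncomputable def jthLargest {n : ℕ} (v : Fin n → ℝ) (j : ℕ) : ℝ :=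
  sSup {x : ℝ | j ≤ (Finset.univ.filter fun i => x ≤ v i).card}

lemma jth_nonempty {n : ℕ} (v : Fin n → ℝ) (j : ℕ) (hj1 : 1 ≤ j) (hjn : j ≤ n) :
    {x : ℝ | j ≤ (Finset.univ.filter fun i => x ≤ v i).card}.Nonempty := by
  have hn : 0 < n := lt_of_lt_of_le hj1 hjn
  have hne : (Finset.univ : Finset (Fin n)).Nonempty := by
    haveI : Nonempty (Fin n) := ⟨⟨0, hn⟩⟩; exact Finset.univ_nonempty
  refine ⟨Finset.univ.inf' hne v, ?_⟩
  have : (Finset.univ.filter fun i => Finset.univ.inf' hne v ≤ v i) = Finset.univ := by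
    apply Finset.filter_true_of_mem
    intro i _
    exact Finset.inf'_le v (Finset.mem_univ i)
  simp only [Set.mem_setOf_eq, this, Finset.card_univ, Fintype.card_fin]
  exact hjn

lemma jth_bddAbove {n : ℕ} (v : Fin n → ℝ) (j : ℕ) (hj1 : 1 ≤ j) (hjn : j ≤ n) :
    BddAbove {x : ℝ | j ≤ (Finset.univ.filter fun i => x ≤ v i).card} := by
  have hn : 0 < n := lt_of_lt_of_le hj1 hjn
  have hne : (Finset.univ : Finset (Fin n)).Nonempty := by
    haveI : Nonempty (Fin n) := ⟨⟨0, hn⟩⟩; exact Finset.univ_nonempty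
  refine ⟨Finset.univ.sup' hne v, ?_⟩
  intro x hx
  simp only [Set.mem_setOf_eq] at hx
  have hcard : 0 < (Finset.univ.filter fun i => x ≤ v i).card := lt_of_lt_of_le hj1 hx
  obtain ⟨i, hi⟩ := Finset.card_pos.mp hcard
  have hxi : x ≤ v i := (Finset.mem_filter.mp hi).2
  exact hxi.trans (Finset.le_sup' v (Finset.mem_univ i))

/-- The sup defining `jthLargest` is attained: it belongs to the set. -/
lemma jth_mem {n : ℕ} (v : Fin n → ℝ) (j : ℕ) (hj1 : 1 ≤ j) (hjn : j ≤ n) :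
    j ≤ (Finset.univ.filter fun i => jthLargest v j ≤ v i).card := by
  set c := jthLargest v j with hc
  by_contra h
  push_neg at h
  set F := Finset.univ.filter fun i => v i < c with hF
  by_cases hFe : F.Nonempty
  · set m := F.sup' hFe v with hm
    have hmc : m < c := by
      apply Finset.sup'_lt_iff hFe |>.mpr
      intro i hi
      exact (Finset.mem_filter.mp hi).2
    obtain ⟨x, hxS, hmx⟩ := exists_lt_of_lt_csSup (jth_nonempty v j hj1 hjn) hmc
    simp only [Set.mem_setOf_eq] at hxS
    have hsub : (Finset.univ.filter fun i => x ≤ v i) ⊆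
        (Finset.univ.filter fun i => c ≤ v i) := by
      intro i hi
      have hxi : x ≤ v i := (Finset.mem_filter.mp hi).2
      refine Finset.mem_filter.mpr ⟨Finset.mem_univ i, ?_⟩
      by_contra hci
      push_neg at hci
      have hiF : i ∈ F := Finset.mem_filter.mpr ⟨Finset.mem_univ i, hci⟩
      have : v i ≤ m := Finset.le_sup' v hiF
      linarith
    have := hxS.trans (Finset.card_le_card hsub)
    omega
  · -- all v i ≥ c
    have hall : ∀ i, c ≤ v i := by
      intro i
      by_contra hci
      push_neg at hci
      exact hFe ⟨i, Finset.mem_filter.mpr ⟨Finset.mem_univ i, hci⟩⟩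
    have : (Finset.univ.filter fun i => c ≤ v i) = Finset.univ :=
      Finset.filter_true_of_mem fun i _ => hall i
    rw [this] at h
    simp only [Finset.card_univ, Fintype.card_fin] at h
    omega

theorem stmt0 {k n : ℕ} (Δ : Set (Fin k → ℝ)) (hΔ : Convex ℝ Δ)
    (g : Fin n → (Fin k → ℝ) → ℝ)
    (hnn : ∀ i, ∀ y ∈ Δ, 0 ≤ g i y)
    (haff : ∀ i, ∀ y ∈ Δ, ∀ z ∈ Δ, ∀ l : ℝ, 0 ≤ l → l ≤ 1 →
      g i (l • y + (1 - l) • z) = l * g i y + (1 - l) * g i z)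
    (j : ℕ) (hj1 : 1 ≤ j) (hjn : j ≤ n) :
    ∀ y ∈ Δ, ∀ z ∈ Δ, ∀ l : ℝ, 0 ≤ l → l ≤ 1 →
      l * jthLargest (fun i => g i y) j + (1 - l) * jthLargest (fun i => g i z) j
        ≤ 2 * jthLargest (fun i => g i (l • y + (1 - l) • z)) j := by
  intro y hy z hz l hl0 hl1
  set w := l • y + (1 - l) • z with hw
  have hwΔ : w ∈ Δ := hΔ hy hz hl0 (by linarith) (by linarith)
  set cy := jthLargest (fun i => g i y) j with hcy
  set cz := jthLargest (fun i => g i z) j with hcz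
  set cw := jthLargest (fun i => g i w) j with hcw
  have hbw := jth_bddAbove (fun i => g i w) j hj1 hjn
  -- l * cy ≤ cw
  have key : ∀ (a b : Fin n → ℝ) (ca : ℝ) (t : ℝ), 0 ≤ t →
      (∀ i, ca ≤ a i → t * ca ≤ b i) →
      j ≤ (Finset.univ.filter fun i => ca ≤ a i).card →
      t * ca ≤ jthLargest b j := by
    intro a b ca t ht himp hcard
    apply le_csSup (jth_bddAbove b j hj1 hjn)
    simp only [Set.mem_setOf_eq]
    refine hcard.trans (Finset.card_le_card ?_)
    intro i hi
    exact Finset.mem_filter.mpr ⟨Finset.mem_univ i,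
      himp i (Finset.mem_filter.mp hi).2⟩
  have h1 : l * cy ≤ cw := by
    apply key (fun i => g i y) (fun i => g i w) cy l hl0 _
      (jth_mem (fun i => g i y) j hj1 hjn)
    intro i hi
    have hgw : g i w = l * g i y + (1 - l) * g i z := haff i y hy z hz l hl0 hl1
    have := hnn i z hz
    nlinarith
  have h2 : (1 - l) * cz ≤ cw := by
    apply key (fun i => g i z) (fun i => g i w) cz (1 - l) (by linarith) _
      (jth_mem (fun i => g i z) j hj1 hjn)
    intro i hi
    have hgw : g i w = l * g i y + (1 - l) * g i z := haff i y hy z hz l hl0 hl1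
    have := hnn i y hy
    nlinarith
  linarith
end

section
/- Let f : Δ → ℝ be convex, let Σ be a finitely supported probability distribution on Δ, and let Σ' be the distribution obtained from Σ by replacing atoms q_S (mass r_S) and q_T (mass r_T) by the pooling update of Algorithm 1 at q_c = λq_S + (1−λ)q_T with f(q_c) = c. Then E_{q∼Σ'}[f(q)] ≤ E_{q∼Σ}[f(q)]. -/
theorem stmt6 {k : ℕ} {ι : Type*} [Fintype ι] [DecidableEq ι]
    (Δ : Set (Fin k → ℝ)) (hΔ : Convex ℝ Δ)
    (f : (Fin k → ℝ) → ℝ) (hf : ConvexOn ℝ Δ f)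
    (x : ι → (Fin k → ℝ)) (hx : ∀ i, x i ∈ Δ)
    (w : ι → ℝ) (hw : ∀ i, 0 ≤ w i) (hw1 : ∑ i, w i = 1)
    (iS iT : ι) (hne : iS ≠ iT)
    (l : ℝ) (hl : l ∈ Set.Ioo (0 : ℝ) 1) (c : ℝ)
    (hc : f (l • x iS + (1 - l) • x iT) = c)
    (w' : ι → ℝ) (wc : ℝ)
    (hcase :
      ((1 - l) * w iS ≤ l * w iT ∧ w' iS = 0 ∧ w' iT = w iT - (1 - l) * w iS / l ∧
        wc = w iS / l) ∨
      (l * w iT < (1 - l) * w iS ∧ w' iS = w iS - l * w iT / (1 - l) ∧ w' iT = 0 ∧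
        wc = w iT / (1 - l)))
    (hother : ∀ i, i ≠ iS → i ≠ iT → w' i = w i) :
    (∑ i, w' i * f (x i)) + wc * f (l • x iS + (1 - l) • x iT) ≤ ∑ i, w i * f (x i) := by

  obtain ⟨hl0, hl1⟩ := hl
  have hl1' : (0:ℝ) < 1 - l := by linarith
  have hconv : f (l • x iS + (1 - l) • x iT) ≤ l * f (x iS) + (1 - l) * f (x iT) :=
    hf.2 (hx iS) (hx iT) hl0.le (by linarith) (by ring)
  have key : ∑ i, (w i - w' i) * f (x i)
      = (w iS - w' iS) * f (x iS) + (w iT - w' iT) * f (x iT) := by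
    rw [Finset.sum_eq_add_of_mem iS iT (Finset.mem_univ _) (Finset.mem_univ _) hne]
    intro c hc hcne
    rw [hother c hcne.1 hcne.2]
    ring
  have hsum : ∑ i, w' i * f (x i)
      = ∑ i, w i * f (x i) - ((w iS - w' iS) * f (x iS) + (w iT - w' iT) * f (x iT)) := by
    rw [← key, ← Finset.sum_sub_distrib]
    congr 1; ext i; ring
  rw [hsum]
  rcases hcase with ⟨h1, h2, h3, h4⟩ | ⟨h1, h2, h3, h4⟩
  · rw [h2, h3, h4]
    have hwc : 0 ≤ w iS / l := div_nonneg (hw iS) hl0.le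
    have := mul_le_mul_of_nonneg_left hconv hwc
    have heq : w iS / l * (l * f (x iS) + (1 - l) * f (x iT))
        = (w iS - 0) * f (x iS) + (w iT - (w iT - (1 - l) * w iS / l)) * f (x iT) := by
      field_simp; ring
    linarith [this, heq.le, heq.ge]
  · rw [h2, h3, h4]
    have hwc : 0 ≤ w iT / (1 - l) := div_nonneg (hw iT) hl1'.le
    have := mul_le_mul_of_nonneg_left hconv hwc
    have heq : w iT / (1 - l) * (l * f (x iS) + (1 - l) * f (x iT))
        = (w iS - (w iS - l * w iT / (1 - l))) * f (x iS) + (w iT - 0) * f (x iT) := by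
      field_simp; ring
    linarith [this, heq.le, heq.ge]
end

section
/- There is an instance with k = 2 states and one convex ex ante constraint for which the ratio between Sender's optimal utility under the ex ante constraint and under the corresponding ex post constraint is unbounded: with Ω = {0,1}, uniform prior, f(q) = q(1), c = 1/2 + ε for ε ∈ (0,1/2), and u_s(q) = max(0, 2·q(1) − 1), the ex ante optimum equals 1/2 (full revelation is valid) while the ex post optimum equals 2ε/(1+2ε), so the ratio (1/2)/(2ε/(1+2ε)) = (1+2ε)/(4ε) → ∞ as ε → 0. -/
/-!
A signaling scheme is recorded by the law of the posterior `q(1) ∈ [0, 1]`; Bayes plausibility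
says its mean is `1/2`. The convex utility `x ↦ max 0 (2x - 1)` lies below its chord over
`[0, c]` for `c ≥ 1/2`, so when all posteriors are at most `c` the sender's value is at most
`(2c - 1)/c · 1/2`, and splitting the prior between the posteriors `0` and `c` attains it.
Ex ante, full revelation is feasible (`c = 1`), giving `1/2`; ex post, `c = 1/2 + ε` gives
`2ε/(1 + 2ε)`.
-/

open MeasureTheory Filter Set

noncomputable def twoPoint (t a b : ℝ) : Measure ℝ :=
  ENNReal.ofReal (1 - t) • Measure.dirac a + ENNReal.ofReal t • Measure.dirac b

section twoPoint

variable {t : ℝ} (a b : ℝ)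

lemma isProbabilityMeasure_twoPoint (ht₀ : 0 ≤ t) (ht₁ : t ≤ 1) :
    IsProbabilityMeasure (twoPoint t a b) := by
  constructor
  simp only [twoPoint, Measure.add_apply, Measure.smul_apply, smul_eq_mul,
    measure_univ, mul_one]
  rw [← ENNReal.ofReal_add (by linarith) ht₀]
  simp

lemma integral_twoPoint (ht₀ : 0 ≤ t) (ht₁ : t ≤ 1) (f : ℝ → ℝ) :
    ∫ x, f x ∂twoPoint t a b = (1 - t) * f a + t * f b := by
  rw [twoPoint, integral_add_measure
      ((integrable_dirac enorm_lt_top).smul_measure ENNReal.ofReal_ne_top)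
      ((integrable_dirac enorm_lt_top).smul_measure ENNReal.ofReal_ne_top),
    integral_smul_measure, integral_smul_measure, integral_dirac, integral_dirac,
    ENNReal.toReal_ofReal (by linarith), ENNReal.toReal_ofReal ht₀, smul_eq_mul, smul_eq_mul]

lemma ae_twoPoint {p : ℝ → Prop} (ha : p a) (hb : p b) : ∀ᵐ x ∂twoPoint t a b, p x := by
  rw [twoPoint, ae_add_measure_iff]
  refine ⟨Measure.ae_smul_measure ?_ _, Measure.ae_smul_measure ?_ _⟩ <;>
    rw [ae_dirac_eq] <;> assumption

end twoPoint

lemma integrable_of_ae_mem_compact {X E : Type*} [TopologicalSpace X] [T2Space X]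
    [MeasurableSpace X] [OpensMeasurableSpace X] [NormedAddCommGroup E]
    {P : Measure X} [IsFiniteMeasure P] {K : Set X} (hK : IsCompact K) {f : X → E} (hf : ContinuousOn f K) (hP : ∀ᵐ x ∂P, x ∈ K) :
    Integrable f P := by
  have := hf.integrableOn_compact (μ := P) hK
  rwa [IntegrableOn, Measure.restrict_eq_self_of_ae_mem hP] at this

lemma max_zero_two_mul_sub_one_le_chord {c x : ℝ} (hc : 1 / 2 ≤ c) (hx₀ : 0 ≤ x)
    (hxc : x ≤ c) : max 0 (2 * x - 1) ≤ (2 * c - 1) / c * x := by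
  have hc₀ : 0 < c := by linarith
  refine max_le (mul_nonneg (div_nonneg (by linarith) hc₀.le) hx₀) ?_
  rw [div_mul_eq_mul_div, le_div_iff₀ hc₀]
  nlinarith

lemma integral_max_zero_two_mul_sub_one_le {P : Measure ℝ} [IsFiniteMeasure P] {c : ℝ}
    (hc : 1 / 2 ≤ c) (hP : ∀ᵐ x ∂P, x ∈ Icc (0 : ℝ) 1) (hPc : ∀ᵐ x ∂P, x ≤ c) :
    ∫ x, max 0 (2 * x - 1) ∂P ≤ (2 * c - 1) / c * ∫ x, x ∂P := by
  rw [← integral_const_mul]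
  refine integral_mono_ae (integrable_of_ae_mem_compact isCompact_Icc (by fun_prop) hP)
    ((integrable_of_ae_mem_compact isCompact_Icc continuousOn_id hP).const_mul _) ?_
  filter_upwards [hP, hPc] with x hx hxc
  exact max_zero_two_mul_sub_one_le_chord hc hx.1 hxc

def senderValues (feasible : Measure ℝ → Prop) : Set ℝ :=
  {v : ℝ | ∃ P : Measure ℝ, IsProbabilityMeasure P ∧
    (∀ᵐ x ∂P, x ∈ Icc (0 : ℝ) 1) ∧ (∫ x, x ∂P) = 1 / 2 ∧
    feasible P ∧ v = ∫ x, max 0 (2 * x - 1) ∂P}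

lemma isGreatest_senderValues_exAnte {ε : ℝ} (hε : 0 ≤ ε) :
    IsGreatest (senderValues fun P => ∫ x, x ∂P ≤ 1 / 2 + ε) (1 / 2) := by
  refine ⟨⟨twoPoint (1 / 2) 0 1, isProbabilityMeasure_twoPoint _ _ (by norm_num) (by norm_num),
    ae_twoPoint _ _ (by norm_num) (by norm_num), ?_, ?_, ?_⟩, ?_⟩
  · rw [integral_twoPoint _ _ (by norm_num) (by norm_num)]; norm_num
  · dsimp only
    rw [integral_twoPoint _ _ (by norm_num) (by norm_num)]; linarith
  · rw [integral_twoPoint _ _ (by norm_num) (by norm_num)]; norm_num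
  · rintro v ⟨P, hP, hP01, hmean, -, rfl⟩
    have := integral_max_zero_two_mul_sub_one_le (c := 1) (by norm_num) hP01
      (hP01.mono fun x hx => hx.2)
    rw [hmean] at this
    norm_num at this ⊢
    exact this

lemma isGreatest_senderValues_exPost {ε : ℝ} (hε₀ : 0 ≤ ε) (hε₁ : ε ≤ 1 / 2) :
    IsGreatest (senderValues fun P => ∀ᵐ x ∂P, x ≤ 1 / 2 + ε) (2 * ε / (1 + 2 * ε)) := by
  have hpos : 0 < 1 + 2 * ε := by linarith
  have ht₀ : 0 ≤ 1 / (1 + 2 * ε) := by positivity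
  have ht₁ : 1 / (1 + 2 * ε) ≤ 1 := by rw [div_le_one hpos]; linarith
  refine ⟨⟨twoPoint (1 / (1 + 2 * ε)) 0 (1 / 2 + ε), isProbabilityMeasure_twoPoint _ _ ht₀ ht₁,
    ae_twoPoint _ _ (by simp) ⟨by linarith, by linarith⟩, ?_, ae_twoPoint _ _ (by linarith) le_rfl, ?_⟩, ?_⟩
  · rw [integral_twoPoint _ _ ht₀ ht₁]; field_simp; ring
  · rw [integral_twoPoint _ _ ht₀ ht₁, max_eq_left (by norm_num : (2:ℝ) * 0 - 1 ≤ 0),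
      max_eq_right (by linarith : (0:ℝ) ≤ 2 * (1 / 2 + ε) - 1)]
    field_simp; ring
  · rintro v ⟨P, hP, hP01, hmean, hpost, rfl⟩
    calc ∫ x, max 0 (2 * x - 1) ∂P
        ≤ (2 * (1 / 2 + ε) - 1) / (1 / 2 + ε) * ∫ x, x ∂P :=
          integral_max_zero_two_mul_sub_one_le (by linarith) hP01 hpost
      _ = 2 * ε / (1 + 2 * ε) := by rw [hmean]; field_simp; ring

lemma tendsto_ratio_nhdsGT_zero :
    Tendsto (fun e : ℝ => (1 + 2 * e) / (4 * e)) (nhdsWithin 0 (Ioi 0)) atTop := by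
  have h : Tendsto (fun e : ℝ => (1 + 2 * e) / 4) (nhdsWithin 0 (Ioi 0)) (nhds (1 / 4)) := by
    exact (Continuous.tendsto' (by fun_prop) 0 _ (by norm_num)).mono_left nhdsWithin_le_nhds
  refine (h.pos_mul_atTop (by norm_num) tendsto_inv_nhdsGT_zero).congr fun e => ?_
  ring

theorem stmt8 (ε : ℝ) (hε : ε ∈ Set.Ioo (0 : ℝ) (1 / 2)) :
    sSup {v : ℝ | ∃ P : Measure ℝ, IsProbabilityMeasure P ∧
        (∀ᵐ x ∂P, x ∈ Set.Icc (0 : ℝ) 1) ∧ (∫ x, x ∂P) = 1 / 2 ∧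
        (∫ x, x ∂P) ≤ 1 / 2 + ε ∧ v = ∫ x, max 0 (2 * x - 1) ∂P} = 1 / 2 ∧
    sSup {v : ℝ | ∃ P : Measure ℝ, IsProbabilityMeasure P ∧
        (∀ᵐ x ∂P, x ∈ Set.Icc (0 : ℝ) 1) ∧ (∫ x, x ∂P) = 1 / 2 ∧
        (∀ᵐ x ∂P, x ≤ 1 / 2 + ε) ∧ v = ∫ x, max 0 (2 * x - 1) ∂P}
      = 2 * ε / (1 + 2 * ε) ∧
    (1 / 2) / (2 * ε / (1 + 2 * ε)) = (1 + 2 * ε) / (4 * ε) ∧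
    Tendsto (fun e : ℝ => (1 + 2 * e) / (4 * e)) (nhdsWithin 0 (Set.Ioi 0)) atTop := by
  obtain ⟨hε₀, hε₁⟩ := hε
  refine ⟨(isGreatest_senderValues_exAnte hε₀.le).csSup_eq,
    (isGreatest_senderValues_exPost hε₀.le hε₁.le).csSup_eq, ?_, tendsto_ratio_nhdsGT_zero⟩
  have : 1 + 2 * ε ≠ 0 := by linarith
  field_simp
  ring
end

section
/- Fix M ≥ 1 and take Ω = {0,1} with uniform prior, u_s(q) = 1/M + |q(1) − 1/2|·(2(M−1)/M), f(q) = q(1), c = 1/2. Then: (a) u_s takes values in [1/M, 1], hence satisfies the M-relaxed Jensen inequality; (b) the only signaling scheme satisfying the ex post constraint q(1) ≤ 1/2 for all support points (together with Bayes-plausibility forcing E[q(1)] = 1/2) is the point mass on the prior, yielding Sender utility 1/M; (c) full revelation satisfies the ex ante constraint E[q(1)] ≤ 1/2 and yields Sender utility 1. Hence the gap of M between ex ante and ex post constraints is achieved for m = 1 constraint. -/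
open MeasureTheory ProbabilityTheory Set

/-!
A function with values in `[a, b]`, `0 < a`, satisfies the `b / a`-relaxed Jensen inequality,
since the left-hand side is at most `b` and the right-hand side at least `(b / a) * a`; for `u_s`
this ratio is `M`. Under the ex post constraint `q ≤ 1/2` a.s., Bayes plausibility
`E[q] = 1/2` forces `q = 1/2` a.s., so the only admissible scheme is the point mass on the prior,
where `u_s = 1/M`. Full revelation puts mass `1/2` on each of `0` and `1`, where `u_s = 1`.
-/

theorem relaxed_jensen_of_mapsTo_Icc {E : Type*} [AddCommGroup E] [Module ℝ E] {s : Set E}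
    (hs : Convex ℝ s) {f : E → ℝ} {a b : ℝ} (ha : 0 < a) (hf : MapsTo f s (Icc a b))
    {x y : E} (hx : x ∈ s) (hy : y ∈ s) {l : ℝ} (hl₀ : 0 ≤ l) (hl₁ : l ≤ 1) :
    l * f x + (1 - l) * f y ≤ b / a * f (l • x + (1 - l) • y) := by
  have hl₁c : 0 ≤ 1 - l := sub_nonneg.2 hl₁
  have hfz := hf (hs hx hy hl₀ hl₁c (add_sub_cancel l 1))
  have hba : 0 ≤ b / a := div_nonneg (ha.le.trans ((hf hx).1.trans (hf hx).2)) ha.le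
  calc l * f x + (1 - l) * f y ≤ l * b + (1 - l) * b := by
        gcongr
        exacts [(hf hx).2, (hf hy).2]
    _ = b / a * a := by field_simp; ring
    _ ≤ b / a * f (l • x + (1 - l) • y) := by gcongr; exact hfz.1

theorem ae_eq_const_of_ae_le_of_integral_eq {α : Type*} [MeasurableSpace α] {μ : Measure α}
    [IsProbabilityMeasure μ] {f : α → ℝ} {c : ℝ} (hfi : Integrable f μ)
    (hle : ∀ᵐ x ∂μ, f x ≤ c) (hint : ∫ x, f x ∂μ = c) : f =ᵐ[μ] fun _ => c := by
  have hgap : ∫ x, (c - f x) ∂μ = 0 := by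
    rw [integral_sub (integrable_const c) hfi, integral_const, hint]
    simp
  have hnonneg : 0 ≤ᵐ[μ] fun x => c - f x := by
    filter_upwards [hle] with x hx
    exact sub_nonneg.2 hx
  filter_upwards [(integral_eq_zero_iff_of_nonneg_ae hnonneg
    ((integrable_const c).sub hfi)).1 hgap] with x hx
  exact (sub_eq_zero.1 hx).symm

theorem eq_dirac_of_ae_eq {α : Type*} [MeasurableSpace α] {μ : Measure α}
    [IsProbabilityMeasure μ] {a : α} (h : ∀ᵐ x ∂μ, x = a) : μ = Measure.dirac a := by
  simpa using (hasLaw_dirac_of_ae_eq (X := id) h).map_eq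

theorem integral_smul_dirac_add_smul_dirac {α : Type*} [MeasurableSpace α]
    [MeasurableSingletonClass α] (f : α → ℝ) (a b : α) {p q : ENNReal} (hp : p ≠ ⊤)
    (hq : q ≠ ⊤) :
    ∫ x, f x ∂(p • Measure.dirac a + q • Measure.dirac b) =
      p.toReal * f a + q.toReal * f b := by
  rw [integral_add_measure ((integrable_dirac enorm_lt_top).smul_measure hp)
      ((integrable_dirac enorm_lt_top).smul_measure hq),
    integral_smul_measure, integral_smul_measure, integral_dirac, integral_dirac]
  rfl

/-- `x` is the posterior probability `q(1)` of state `1`. -/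
noncomputable def senderUtility (M x : ℝ) : ℝ := 1 / M + |x - 1 / 2| * (2 * (M - 1) / M)

theorem senderUtility_mem_Icc {M x : ℝ} (hM : 1 ≤ M) (hx : x ∈ Icc (0 : ℝ) 1) :
    senderUtility M x ∈ Icc (1 / M) 1 := by
  have hM₀ : 0 < M := by linarith
  have hdist : |x - 1 / 2| ≤ 1 / 2 := abs_le.2 ⟨by linarith [hx.1], by linarith [hx.2]⟩
  have hslope : 0 ≤ 2 * (M - 1) / M := div_nonneg (by linarith) hM₀.le
  refine ⟨le_add_of_nonneg_right (mul_nonneg (abs_nonneg _) hslope), ?_⟩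
  calc senderUtility M x ≤ 1 / M + 1 / 2 * (2 * (M - 1) / M) := by
        unfold senderUtility; gcongr
    _ = 1 := by field_simp; ring

theorem senderUtility_half (M : ℝ) : senderUtility M (1 / 2) = 1 / M := by
  simp [senderUtility]

theorem senderUtility_eq_one_of_abs_sub_half_eq {M x : ℝ} (hM : M ≠ 0)
    (hx : |x - 1 / 2| = 1 / 2) :
    senderUtility M x = 1 := by
  rw [senderUtility, hx]
  field_simp
  ring

theorem stmt9 (M : ℝ) (hM : 1 ≤ M) :
    let u : ℝ → ℝ := fun x => 1 / M + |x - 1 / 2| * (2 * (M - 1) / M)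
    (∀ x ∈ Set.Icc (0 : ℝ) 1, u x ∈ Set.Icc (1 / M) 1) ∧
    (∀ x ∈ Set.Icc (0 : ℝ) 1, ∀ y ∈ Set.Icc (0 : ℝ) 1, ∀ l : ℝ, 0 ≤ l → l ≤ 1 →
      l * u x + (1 - l) * u y ≤ M * u (l * x + (1 - l) * y)) ∧
    (∀ P : Measure ℝ, IsProbabilityMeasure P → (∀ᵐ x ∂P, x ∈ Set.Icc (0 : ℝ) 1) →
      (∫ x, x ∂P) = 1 / 2 → (∀ᵐ x ∂P, x ≤ 1 / 2) →
      P = Measure.dirac (1 / 2) ∧ (∫ x, u x ∂P) = 1 / M) ∧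
    (let P₀ : Measure ℝ :=
        (1 / 2 : ENNReal) • Measure.dirac (0 : ℝ) + (1 / 2 : ENNReal) • Measure.dirac (1 : ℝ);
      IsProbabilityMeasure P₀ ∧ (∫ x, x ∂P₀) = 1 / 2 ∧ (∫ x, u x ∂P₀) = 1) := by
  intro u
  have hM₀ : 0 < M := by linarith
  have hbounds : MapsTo u (Icc 0 1) (Icc (1 / M) 1) := fun x hx => senderUtility_mem_Icc hM hx
  refine ⟨hbounds, fun x hx y hy l hl₀ hl₁ => ?_, fun P _ hsupp hmean hpost => ?_, ?_⟩
  · simpa using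
      relaxed_jensen_of_mapsTo_Icc (convex_Icc 0 1) (one_div_pos.2 hM₀) hbounds hx hy hl₀ hl₁
  · have hprior : ∀ᵐ x ∂P, x = 1 / 2 :=
      ae_eq_const_of_ae_le_of_integral_eq (.of_mem_Icc 0 1 aemeasurable_id hsupp) hpost hmean
    have hP := eq_dirac_of_ae_eq hprior
    refine ⟨hP, ?_⟩
    rw [hP, integral_dirac]
    exact senderUtility_half M
  · have hhalf : (1 / 2 : ENNReal).toReal = 1 / 2 := by norm_num
    refine ⟨⟨?_⟩, ?_, ?_⟩
    · simp [ENNReal.inv_two_add_inv_two]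
    · rw [integral_smul_dirac_add_smul_dirac _ _ _ (by simp) (by simp), hhalf]
      norm_num
    · have hu₀ : u 0 = 1 := senderUtility_eq_one_of_abs_sub_half_eq hM₀.ne' (by norm_num)
      have hu₁ : u 1 = 1 := senderUtility_eq_one_of_abs_sub_half_eq hM₀.ne' (by norm_num)
      rw [integral_smul_dirac_add_smul_dirac _ _ _ (by simp) (by simp), hhalf, hu₀, hu₁]
      norm_num
end

section
/- Let Ω = {0,1}^m with uniform prior p, u_s(q) = ‖q‖_∞, and for 1 ≤ i ≤ m the constraint f_i(q) = Pr_{ω∼q}[ω_i = 1] with c_i = 1/2. Then full revelation (the uniform distribution over the 2^m point masses e_ω) satisfies all m ex ante constraints and yields Sender utility 1, while the sequence of m pooling passes (pooling each posterior q with its reflection R[q,i] in the i-th bit, for i = 1,...,m in order) terminates in the no-revelation scheme supported on {p}, yielding Sender utility 2^{−m}. Hence the conversion algorithm loses a multiplicative factor of exactly 2^m = M^m with M = 2. -/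
open MeasureTheory

lemma integrable_dirac_aux {α E : Type*} [MeasurableSpace α] [MeasurableSingletonClass α]
    [NormedAddCommGroup E] (f : α → E) (a : α) : Integrable f (Measure.dirac a) :=
  (integrable_const (f a)).congr (ae_eq_dirac f).symm

lemma pool_aux {m : ℕ} (i : Fin m) (ω₀ ω : Fin m → Bool) :
    (if ∀ j : Fin m, (i : ℕ) + 1 ≤ (j : ℕ) → ω j = ω₀ j then (1 / 2 : ℝ) ^ ((i : ℕ) + 1) else 0)
      = (1 / 2 : ℝ) * (if ∀ j : Fin m, (i : ℕ) ≤ (j : ℕ) → ω j = ω₀ j then (1 / 2 : ℝ) ^ (i : ℕ) else 0)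
        + (1 / 2 : ℝ) * (if ∀ j : Fin m, (i : ℕ) ≤ (j : ℕ) → Function.update ω i (!ω i) j = ω₀ j
            then (1 / 2 : ℝ) ^ (i : ℕ) else 0) := by
  classical
  by_cases hA : ∀ j : Fin m, (i : ℕ) + 1 ≤ (j : ℕ) → ω j = ω₀ j
  · rw [if_pos hA]
    by_cases hb : ω i = ω₀ i
    · have hB : ∀ j : Fin m, (i : ℕ) ≤ (j : ℕ) → ω j = ω₀ j := by
        intro j hj
        rcases eq_or_lt_of_le hj with h | h
        · have : j = i := Fin.ext h.symm
          rw [this]; exact hb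
        · exact hA j h
      have hC : ¬ ∀ j : Fin m, (i : ℕ) ≤ (j : ℕ) → Function.update ω i (!ω i) j = ω₀ j := by
        intro hC
        have := hC i le_rfl
        rw [Function.update_self] at this
        rw [← hb] at this
        exact (Bool.not_ne_self _ this)
      rw [if_pos hB, if_neg hC]; ring
    · have hB : ¬ ∀ j : Fin m, (i : ℕ) ≤ (j : ℕ) → ω j = ω₀ j := fun h => hb (h i le_rfl)
      have hC : ∀ j : Fin m, (i : ℕ) ≤ (j : ℕ) → Function.update ω i (!ω i) j = ω₀ j := by
        intro j hj
        rcases eq_or_lt_of_le hj with h | h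
        · have hji : j = i := Fin.ext h.symm
          subst hji
          rw [Function.update_self]
          cases hω : ω j <;> cases hω₀ : ω₀ j <;> simp_all
        · have hji : j ≠ i := by
            intro e; subst e; exact absurd rfl (Nat.ne_of_gt h)
          rw [Function.update_of_ne hji]
          exact hA j h
      rw [if_neg hB, if_pos hC]; ring
  · have hB : ¬ ∀ j : Fin m, (i : ℕ) ≤ (j : ℕ) → ω j = ω₀ j := by
      intro h; exact hA fun j hj => h j (Nat.le_of_succ_le hj)
    have hC : ¬ ∀ j : Fin m, (i : ℕ) ≤ (j : ℕ) → Function.update ω i (!ω i) j = ω₀ j := by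
      intro h
      apply hA
      intro j hj
      have hji : j ≠ i := by
        intro e; subst e; exact absurd hj (by omega)
      have := h j (Nat.le_of_succ_le hj)
      rwa [Function.update_of_ne hji] at this
    rw [if_neg hA, if_neg hB, if_neg hC]; ring

lemma count_aux {m : ℕ} (i : Fin m) :
    ∑ ω₀ : Fin m → Bool, (if ω₀ i then (1 : ℝ) else 0) = 2 ^ m / 2 := by
  classical
  set S := ∑ ω₀ : Fin m → Bool, (if ω₀ i then (1 : ℝ) else 0) with hS
  have hinv : Function.Involutive (fun ω : Fin m → Bool => Function.update ω i (!ω i)) := by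
    intro ω
    simp [Function.update_idem, Function.update_self]
  have h1 : (∑ ω₀ : Fin m → Bool, (if ω₀ i then (0 : ℝ) else 1)) = S := by
    rw [hS]
    refine Fintype.sum_equiv hinv.toPerm _ _ ?_
    intro ω
    simp only [Function.Involutive.coe_toPerm, Function.update_self]
    cases h : ω i <;> simp
  have h2 : S + S = 2 ^ m := by
    nth_rewrite 2 [← h1]
    rw [hS, ← Finset.sum_add_distrib]
    have : ∀ ω₀ : Fin m → Bool,
        ((if ω₀ i then (1 : ℝ) else 0) + (if ω₀ i then (0 : ℝ) else 1)) = 1 := by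
      intro ω₀; split <;> norm_num
    rw [Finset.sum_congr rfl fun ω₀ _ => this ω₀, Finset.sum_const, Finset.card_univ]
    simp [Fintype.card_fun]
  linarith

open Classical in
theorem stmt16 (m : ℕ) :
    let Ω := Fin m → Bool;
    -- posterior after pass `i`, in the class of `ω₀`: uniform on the first `i` bits,
    -- deterministic (equal to `ω₀`) on bits `≥ i`
    let qp : ℕ → Ω → (Ω → ℝ) := fun i ω₀ ω =>
      if ∀ j : Fin m, i ≤ (j : ℕ) → ω j = ω₀ j then (1 / 2 : ℝ) ^ i else 0;
    let P : ℕ → Measure (Ω → ℝ) := fun i =>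
      ((2 ^ m : ENNReal))⁻¹ • ∑ ω₀ : Ω, Measure.dirac (qp i ω₀);
    let flip : (Ω → ℝ) → Fin m → (Ω → ℝ) := fun q i ω => q (Function.update ω i (!ω i));
    -- P 0 is full revelation: it is Bayes-plausible, satisfies the m ex ante
    -- constraints with equality, and yields Sender utility 1
    IsProbabilityMeasure (P 0) ∧
    (∀ i : Fin m, (∫ q, (∑ ω : Ω, if ω i then q ω else 0) ∂(P 0)) = 1 / 2) ∧
    (∫ q, ‖q‖ ∂(P 0)) = 1 ∧
    -- pass `i+1` pools each posterior `q` with its bit-`i` reflection `R[q,i]`,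
    -- with pooling coefficient λ = 1/2
    (∀ i : Fin m, ∀ ω₀ : Ω,
      qp ((i : ℕ) + 1) ω₀ = (1 / 2 : ℝ) • qp i ω₀ + (1 / 2 : ℝ) • flip (qp i ω₀) i) ∧
    -- after all m passes we get no revelation, with Sender utility 2^(-m)
    P m = Measure.dirac (fun _ => (1 / 2 : ℝ) ^ m) ∧
    (∫ q, ‖q‖ ∂(P m)) = (1 / 2 : ℝ) ^ m ∧
    (1 : ℝ) = 2 ^ m * (1 / 2 : ℝ) ^ m := by
  intro Ω qp P flip
  have hcard : (Fintype.card Ω : ℕ) = 2 ^ m := by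
    simp [Ω, Fintype.card_fun]
  have h2m : ((2 : ENNReal) ^ m) ≠ 0 := by positivity
  have h2mtop : ((2 : ENNReal) ^ m) ≠ ⊤ := ENNReal.pow_ne_top (by norm_num)
  have h2mr : ((2 : ℝ) ^ m) ≠ 0 := by positivity
  have hqp0 : ∀ ω₀ ω : Ω, qp 0 ω₀ ω = if ω = ω₀ then 1 else 0 := by
    intro ω₀ ω
    simp only [qp]
    congr 1
    · simp only [Nat.zero_le, true_implies, pow_zero]
      exact propext (funext_iff).symm
  have hint : ∀ (i : ℕ) (f : (Ω → ℝ) → ℝ),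
      (∫ q, f q ∂(P i)) = (2 ^ m : ℝ)⁻¹ * ∑ ω₀ : Ω, f (qp i ω₀) := by
    intro i f
    simp only [P]
    rw [integral_smul_measure,
      integral_finset_sum_measure (fun ω₀ _ => integrable_dirac_aux f (qp i ω₀))]
    simp [ENNReal.toReal_inv, ENNReal.toReal_pow]
  have hPm : P m = Measure.dirac (fun _ => (1 / 2 : ℝ) ^ m) := by
    have hqpm : ∀ ω₀ : Ω, qp m ω₀ = fun _ => (1 / 2 : ℝ) ^ m := by
      intro ω₀
      funext ω
      simp only [qp]
      rw [if_pos]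
      intro j hj
      exact absurd hj (by omega)
    simp only [P, hqpm]
    rw [Finset.sum_const, Finset.card_univ, hcard,
      ← Nat.cast_smul_eq_nsmul ENNReal, smul_smul]
    push_cast
    rw [ENNReal.inv_mul_cancel h2m h2mtop, one_smul]
  refine ⟨?_, ?_, ?_, ?_, hPm, ?_, ?_⟩
  · constructor
    simp only [P, Measure.smul_apply, Measure.coe_finset_sum, Finset.sum_apply,
      Measure.dirac_apply_of_mem (Set.mem_univ _), smul_eq_mul]
    rw [Finset.sum_const, Finset.card_univ, hcard]
    simp [ENNReal.inv_mul_cancel h2m h2mtop]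
  · intro i
    rw [hint]
    have hval : ∀ ω₀ : Ω, (∑ ω : Ω, if ω i then qp 0 ω₀ ω else 0)
        = if ω₀ i then (1 : ℝ) else 0 := by
      intro ω₀
      rw [Finset.sum_eq_single ω₀]
      · rw [hqp0 ω₀ ω₀, if_pos rfl]
      · intro ω _ hne
        rw [hqp0 ω₀ ω, if_neg hne]
        simp
      · simp
    rw [Finset.sum_congr rfl fun ω₀ _ => hval ω₀, count_aux i]
    field_simp
  · rw [hint]
    have hn : ∀ ω₀ : Ω, ‖qp 0 ω₀‖ = 1 := by
      intro ω₀
      apply le_antisymm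
      · apply (pi_norm_le_iff_of_nonneg (by norm_num)).2
        intro ω
        rw [hqp0]
        split <;> simp
      · calc (1 : ℝ) = ‖qp 0 ω₀ ω₀‖ := by rw [hqp0, if_pos rfl]; simp
          _ ≤ ‖qp 0 ω₀‖ := norm_le_pi_norm _ _
    rw [Finset.sum_congr rfl fun ω₀ _ => hn ω₀, Finset.sum_const, Finset.card_univ, hcard]
    simp [h2mr]
  · intro i ω₀
    funext ω
    simp only [qp, flip, Pi.add_apply, Pi.smul_apply, smul_eq_mul]
    exact pool_aux i ω₀ ω
  · rw [hPm, integral_dirac]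
    simp [abs_of_nonneg]
  · rw [← mul_pow]; norm_num
end
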